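/- Let D >= 1. There exists an RNN R = Q∘K with input dimension 1, output dimension 2, and hidden state size 9 such that for all x ∈ [-D, D] and all t ∈ ℕ₀: |((R D x)[t])_1 - x²| <= (D²/2) * 4^{-t}, ((R D x)[t])_2 = x, ‖(K D x)[t]‖_∞ <= D, and ‖(R D x)[t]‖_∞ <= D². -/

import Mathlib

/-!
On `[0, 1]`, Yarotsky's sawtooth expansion `y ^ 2 = y - ∑_{s ≥ 1} hat^[s] y / 4 ^ s` holds with
remainder `hat^[t] y * (1 - hat^[t] y) / 4 ^ t ∈ [0, 4 ^ (-t) / 4]` after `t` terms, because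
`hat u * (1 - hat u) = 4 u (1 - u) - hat u`. The network applies it to `y = |x| / D` and adds
one term of the series per time step, keeping every hidden unit in `[0, D]` by carrying the
sawtooth at scale `D / 4 ^ t`.
-/

/-- ReLU applied componentwise. -/
noncomputable def relu {n : Type*} (v : n → ℝ) : n → ℝ := fun i => max 0 (v i)

/-- An RNN with input index type `ι`, hidden state index type `κ`, output index type `ω`,
parametrized by weights `A_h, A_x, A_o, b_h, b_o`. -/
structure RNN (ι κ ω : Type) where
  Ah : Matrix κ κ ℝ
  Ax : Matrix κ ι ℝ
  Ao : Matrix ω κ ℝ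
  bh : κ → ℝ
  bo : ω → ℝ

/-- Hidden state sequence `(K 𝒟 x)[t]` for the input sequence `(𝒟 x)[t] = x·1{t=0}`,
with the convention `h[-1] = 0`:  `h[0] = ρ(A_x x + b_h)`, `h[t+1] = ρ(A_h h[t] + b_h)`. -/
noncomputable def RNN.hid {ι κ ω : Type} [Fintype ι] [Fintype κ] (R : RNN ι κ ω)
    (x : ι → ℝ) : ℕ → κ → ℝ
  | 0 => relu (R.Ax.mulVec x + R.bh)
  | t + 1 => relu (R.Ah.mulVec (RNN.hid R x t) + R.bh)

/-- Output sequence `(R 𝒟 x)[t] = A_o h[t] + b_o`. -/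
noncomputable def RNN.out {ι κ ω : Type} [Fintype ι] [Fintype κ] (R : RNN ι κ ω)
    (x : ι → ℝ) (t : ℕ) : ω → ℝ :=
  R.Ao.mulVec (R.hid x t) + R.bo

open Set
open scoped Matrix

section
variable {α : Type*}

lemma max_zero_add_max_zero_neg [AddCommGroup α] [LinearOrder α] [IsOrderedAddMonoid α] (x : α) :
    max 0 x + max 0 (-x) = |x| := by
  simpa only [max_comm] using max_zero_add_max_neg_zero_eq_abs_self x

lemma max_zero_sub_max_zero_neg [AddCommGroup α] [LinearOrder α] [IsOrderedAddMonoid α] (x : α) :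
    max 0 x - max 0 (-x) = x := by
  simpa only [max_comm] using max_zero_sub_max_neg_zero_eq_self x

lemma abs_mul_le_of_mem_Icc [Ring α] [LinearOrder α] [IsStrictOrderedRing α] {a u D : α}
    (ha : 0 ≤ a) (haD : a ≤ D) (hu : u ∈ Icc 0 1) : |a * u| ≤ D := by
  rw [abs_of_nonneg (mul_nonneg ha hu.1)]
  exact (mul_le_of_le_one_right ha hu.2).trans haD

end

lemma relu_vecCons {n : ℕ} (a : ℝ) (v : Fin n → ℝ) :
    relu (Matrix.vecCons a v) = Matrix.vecCons (max 0 a) (relu v) := by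
  ext i; cases i using Fin.cases <;> rfl

lemma relu_vecEmpty : relu (![] : Fin 0 → ℝ) = ![] := Subsingleton.elim _ _

-- On `[0, 1]` this is the tent map `u ↦ 2 * min u (1 - u)`.
noncomputable def hat (u : ℝ) : ℝ := 2 * u - 4 * max 0 (u - 1 / 2)

lemma mapsTo_hat : MapsTo hat (Icc 0 1) (Icc 0 1) := by
  rintro u ⟨hu0, hu1⟩
  rcases le_total u (1 / 2) with hu | hu
  · rw [hat, max_eq_left (by linarith)]; constructor <;> linarith
  · rw [hat, max_eq_right (by linarith)]; constructor <;> linarith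

lemma hat_mul_one_sub_hat (u : ℝ) : hat u * (1 - hat u) = 4 * u * (1 - u) - hat u := by
  rcases le_total u (1 / 2) with hu | hu
  · rw [hat, max_eq_left (by linarith)]; ring
  · rw [hat, max_eq_right (by linarith)]; ring

lemma div_four_mul_hat (a u : ℝ) : a / 4 * hat u = a * u / 2 - a * max 0 (u - 1 / 2) := by
  rw [hat]; ring

noncomputable def sawtoothSum (t : ℕ) (y : ℝ) : ℝ :=
  ∑ s ∈ Finset.range t, hat^[s + 1] y / 4 ^ (s + 1)

lemma sawtoothSum_succ (t : ℕ) (y : ℝ) :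
    sawtoothSum (t + 1) y = sawtoothSum t y + hat (hat^[t] y) / 4 ^ (t + 1) := by
  rw [sawtoothSum, Finset.sum_range_succ, Function.iterate_succ_apply']
  rfl

lemma sub_sawtoothSum (t : ℕ) (y : ℝ) :
    y - sawtoothSum t y = y ^ 2 + hat^[t] y * (1 - hat^[t] y) / 4 ^ t := by
  induction t with
  | zero => rw [sawtoothSum, Finset.sum_range_zero, Function.iterate_zero_apply]; ring
  | succ t ih =>
    rw [sawtoothSum_succ, Function.iterate_succ_apply', hat_mul_one_sub_hat]
    linear_combination ih

lemma sawtoothSum_nonneg {y : ℝ} (hy : y ∈ Icc 0 1) (t : ℕ) : 0 ≤ sawtoothSum t y :=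
  Finset.sum_nonneg fun s _ => div_nonneg ((mapsTo_hat.iterate (s + 1) hy).1) (by positivity)

lemma iterate_hat_mul_one_sub_div_pow_nonneg {y : ℝ} (hy : y ∈ Icc 0 1) (t : ℕ) :
    0 ≤ hat^[t] y * (1 - hat^[t] y) / 4 ^ t := by
  obtain ⟨h0, h1⟩ := mapsTo_hat.iterate t hy
  exact div_nonneg (mul_nonneg h0 (by linarith)) (by positivity)

lemma sawtoothSum_le_self {y : ℝ} (hy : y ∈ Icc 0 1) (t : ℕ) : sawtoothSum t y ≤ y := by
  have := sub_sawtoothSum t y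
  nlinarith [iterate_hat_mul_one_sub_div_pow_nonneg hy t]

lemma abs_sub_sawtoothSum_sub_sq_le {y : ℝ} (hy : y ∈ Icc 0 1) (t : ℕ) :
    |y - sawtoothSum t y - y ^ 2| ≤ (4 : ℝ) ^ (-(t : ℤ)) / 4 := by
  rw [sub_sawtoothSum, add_sub_cancel_left,
    abs_of_nonneg (iterate_hat_mul_one_sub_div_pow_nonneg hy t)]
  calc hat^[t] y * (1 - hat^[t] y) / 4 ^ t ≤ 1 / 4 / 4 ^ t := by
        gcongr; nlinarith [sq_nonneg (hat^[t] y - 1 / 2)]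
    _ = (4 : ℝ) ^ (-(t : ℤ)) / 4 := by rw [zpow_neg, zpow_natCast]; ring

/- Hidden units, in order: `x⁺`, `x⁻`, the scaled sawtooth, its part above the threshold, the
threshold, the partial sum, one-shot copies of `x⁺` and `x⁻` (they feed `|x|` into the sawtooth at
step 1), and the constant `D / 2`, which cancels after step 0 the biases needed at step 0. -/
noncomputable def squaringRNN (D : ℝ) : RNN (Fin 1) (Fin 9) (Fin 2) where
  Ah := !![1,0,0,0,0,0,0,0,0;
           0,1,0,0,0,0,0,0,0;
           0,0,1/2,-1,0,0,1,1,0;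
           0,0,1/2,-1,-1,0,1,1,0;
           0,0,0,0,1/4,0,0,0,-1;
           0,0,1/2,-1,0,1,0,0,0;
           0,0,0,0,0,0,1,0,-2;
           0,0,0,0,0,0,0,1,-2;
           0,0,0,0,0,0,0,0,0]
  Ax := !![1;-1;0;0;0;0;1;-1;0]
  Ao := !![D,D,-D/2,D,0,-D,0,0,0;
           1,-1,0,0,0,0,0,0,0]
  bh := ![0,0,0,0,D/2,0,0,0,D/2]
  bo := ![0,0]

lemma squaringRNN_Ah_mulVec_add_bh (D : ℝ) (h : Fin 9 → ℝ) :
    (squaringRNN D).Ah *ᵥ h + (squaringRNN D).bh =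
      ![h 0, h 1, h 2 / 2 - h 3 + h 6 + h 7, h 2 / 2 - h 3 - h 4 + h 6 + h 7,
        h 4 / 4 - h 8 + D / 2, h 2 / 2 - h 3 + h 5, h 6 - 2 * h 8, h 7 - 2 * h 8, D / 2] := by
  ext i
  fin_cases i <;> simp [squaringRNN, dotProduct, Fin.sum_univ_succ] <;> ring

lemma squaringRNN_Ax_mulVec_add_bh (D x : ℝ) :
    (squaringRNN D).Ax *ᵥ (fun _ => x) + (squaringRNN D).bh =
      ![x, -x, 0, 0, D / 2, 0, x, -x, D / 2] := by
  ext i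
  fin_cases i <;> simp [squaringRNN, dotProduct]

lemma squaringRNN_Ao_mulVec_add_bo (D : ℝ) (h : Fin 9 → ℝ) :
    (squaringRNN D).Ao *ᵥ h + (squaringRNN D).bo =
      ![D * (h 0 + h 1) - D / 2 * h 2 + D * h 3 - D * h 5, h 0 - h 1] := by
  ext i
  fin_cases i <;> simp [squaringRNN, dotProduct, Fin.sum_univ_succ] <;> ring

noncomputable def squaringState (D x : ℝ) : ℕ → Fin 9 → ℝ
  | 0 => ![max 0 x, max 0 (-x), 0, 0, D / 2, 0, max 0 x, max 0 (-x), D / 2]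
  | t + 1 => ![max 0 x, max 0 (-x), D / 4 ^ t * hat^[t] (|x| / D),
      D / 4 ^ t * max 0 (hat^[t] (|x| / D) - 1 / 2), D / 4 ^ t / 8, D * sawtoothSum t (|x| / D),
      0, 0, D / 2]

lemma relu_Ah_mulVec_squaringState_zero {D x : ℝ} (hD : 0 < D) (hx : |x| ≤ D) :
    relu ((squaringRNN D).Ah *ᵥ squaringState D x 0 + (squaringRNN D).bh) =
      squaringState D x 1 := by
  have hxD : max 0 x ≤ D := max_le hD.le ((le_abs_self x).trans hx)
  have hnxD : max 0 (-x) ≤ D := max_le hD.le ((neg_le_abs x).trans hx)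
  have habs : D * (|x| / D) = |x| := mul_div_cancel₀ _ hD.ne'
  simp only [squaringRNN_Ah_mulVec_add_bh, relu_vecCons, relu_vecEmpty, squaringState,
    Matrix.cons_val, Matrix.vecCons_inj, pow_zero, div_one, Function.iterate_zero_apply]
  refine ⟨max_eq_right (le_max_left _ _), max_eq_right (le_max_left _ _), ?_, ?_, ?_, ?_,
    max_eq_left (by linarith), max_eq_left (by linarith), max_eq_right (by positivity), trivial⟩
  · rw [add_assoc, max_zero_add_max_zero_neg, habs, max_eq_right (by positivity)]; ring
  · rw [add_assoc, max_zero_add_max_zero_neg, mul_max_of_nonneg _ _ hD.le, mul_zero, mul_sub, habs]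
    congr 1; ring
  · rw [sub_add_cancel, max_eq_right (by positivity)]; ring
  · simp [sawtoothSum]

lemma relu_Ah_mulVec_squaringState_succ {D x : ℝ} (hD : 0 < D) (hx : |x| ≤ D) (t : ℕ) :
    relu ((squaringRNN D).Ah *ᵥ squaringState D x (t + 1) + (squaringRNN D).bh) =
      squaringState D x (t + 2) := by
  have hy : |x| / D ∈ Icc 0 1 := ⟨by positivity, (div_le_one hD).2 hx⟩
  have hg := mapsTo_hat.iterate (t + 1) hy
  rw [Function.iterate_succ_apply'] at hg
  have ha : 0 ≤ D / 4 ^ t / 4 := by positivity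
  simp only [squaringRNN_Ah_mulVec_add_bh, relu_vecCons, relu_vecEmpty, squaringState,
    Matrix.cons_val, Matrix.vecCons_inj, Function.iterate_succ_apply', sawtoothSum_succ, add_zero,
    show D / 4 ^ (t + 1) = D / 4 ^ t / 4 by rw [pow_succ, div_div], ← div_four_mul_hat]
  refine ⟨max_eq_right (le_max_left _ _), max_eq_right (le_max_left _ _),
    max_eq_right (mul_nonneg ha hg.1), ?_, ?_, ?_,
    max_eq_left (by linarith), max_eq_left (by linarith), max_eq_right (by positivity), trivial⟩
  · rw [mul_max_of_nonneg _ _ ha, mul_zero]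
    congr 1; ring
  · rw [sub_add_cancel, max_eq_right (by positivity)]; ring
  · have hS := mul_nonneg hD.le (sawtoothSum_nonneg hy t)
    rw [max_eq_right (add_nonneg (mul_nonneg ha hg.1) hS)]
    ring

lemma squaringRNN_hid {D x : ℝ} (hD : 0 < D) (hx : |x| ≤ D) (t : ℕ) :
    (squaringRNN D).hid (fun _ => x) t = squaringState D x t := by
  induction t with
  | zero =>
    rw [RNN.hid, squaringRNN_Ax_mulVec_add_bh]
    simp only [relu_vecCons, relu_vecEmpty, squaringState, max_self,
      max_eq_right (by positivity : (0 : ℝ) ≤ D / 2)]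
  | succ t ih =>
    rw [RNN.hid, ih]
    cases t with
    | zero => exact relu_Ah_mulVec_squaringState_zero hD hx
    | succ t => exact relu_Ah_mulVec_squaringState_succ hD hx t

lemma squaringRNN_out {D x : ℝ} (hD : 0 < D) (hx : |x| ≤ D) (t : ℕ) :
    (squaringRNN D).out (fun _ => x) t = ![D ^ 2 * (|x| / D - sawtoothSum t (|x| / D)), x] := by
  rw [RNN.out, squaringRNN_hid hD hx, squaringRNN_Ao_mulVec_add_bo]
  cases t with
  | zero =>
    simp only [squaringState, Matrix.cons_val, Matrix.vecCons_inj, max_zero_add_max_zero_neg,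
      max_zero_sub_max_zero_neg, and_true]
    rw [sawtoothSum, Finset.sum_range_zero]; field_simp; ring
  | succ t =>
    simp only [squaringState, Matrix.cons_val, Matrix.vecCons_inj, max_zero_add_max_zero_neg,
      max_zero_sub_max_zero_neg, sawtoothSum_succ, and_true]
    rw [hat]; field_simp; ring

lemma norm_squaringState_le {D x : ℝ} (hD : 0 < D) (hx : |x| ≤ D) (t : ℕ) :
    ‖squaringState D x t‖ ≤ D := by
  have hy : |x| / D ∈ Icc 0 1 := ⟨by positivity, (div_le_one hD).2 hx⟩
  have hxD : |max 0 x| ≤ D := by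
    rw [abs_of_nonneg (le_max_left _ _)]; exact max_le hD.le ((le_abs_self x).trans hx)
  have hnxD : |max 0 (-x)| ≤ D := by
    rw [abs_of_nonneg (le_max_left _ _)]; exact max_le hD.le ((neg_le_abs x).trans hx)
  have hD2 : |D / 2| ≤ D := by rw [abs_of_pos (by positivity)]; linarith
  simp only [pi_norm_le_iff_of_nonneg hD.le, Fin.forall_fin_succ, IsEmpty.forall_iff,
    Real.norm_eq_abs]
  cases t with
  | zero =>
    simp only [squaringState, Matrix.cons_val_zero, Matrix.cons_val_succ, abs_zero]
    exact ⟨hxD, hnxD, hD.le, hD.le, hD2, hD.le, hxD, hnxD, hD2, trivial⟩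
  | succ t =>
    simp only [squaringState, Matrix.cons_val_zero, Matrix.cons_val_succ, abs_zero]
    have ha : 0 ≤ D / 4 ^ t := by positivity
    have haD : D / 4 ^ t ≤ D := div_le_self hD.le (one_le_pow₀ (by norm_num))
    have hg := mapsTo_hat.iterate t hy
    refine ⟨hxD, hnxD, abs_mul_le_of_mem_Icc ha haD hg,
      abs_mul_le_of_mem_Icc ha haD ⟨le_max_left _ _, max_le zero_le_one (by linarith [hg.2])⟩, ?_,
      abs_mul_le_of_mem_Icc hD.le le_rfl
        ⟨sawtoothSum_nonneg hy t, (sawtoothSum_le_self hy t).trans hy.2⟩,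
      hD.le, hD.le, hD2, trivial⟩
    rw [abs_of_nonneg (by positivity)]
    exact (div_le_self ha (by norm_num)).trans haD

/-- Lemma (squaring together with identity): for `D ≥ 1` there is an RNN with input
dimension 1, output dimension 2, and hidden state size 9 such that for all
`x ∈ [−D, D]` and `t ∈ ℕ₀`: `|((R 𝒟 x)[t])₁ − x²| ≤ (D²/2)·4^{−t}`,
`((R 𝒟 x)[t])₂ = x`, `‖(K 𝒟 x)[t]‖∞ ≤ D`, and `‖(R 𝒟 x)[t]‖∞ ≤ D²`. -/
theorem stmt15 (D : ℝ) (hD : 1 ≤ D) :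
    ∃ R : RNN (Fin 1) (Fin 9) (Fin 2),
      ∀ x : ℝ, x ∈ Set.Icc (-D) D → ∀ t : ℕ,
        |R.out (fun _ => x) t 0 - x ^ 2| ≤ D ^ 2 / 2 * (4 : ℝ) ^ (-(t : ℤ)) ∧
        R.out (fun _ => x) t 1 = x ∧
        ‖R.hid (fun _ => x) t‖ ≤ D ∧ ‖R.out (fun _ => x) t‖ ≤ D ^ 2 := by
  have hD0 : 0 < D := by linarith
  refine ⟨squaringRNN D, fun x hx t => ?_⟩
  have hxD : |x| ≤ D := abs_le.2 hx
  have hy : |x| / D ∈ Icc 0 1 := ⟨by positivity, (div_le_one hD0).2 hxD⟩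
  have hsq : D ^ 2 * (|x| / D) ^ 2 = x ^ 2 := by field_simp; exact sq_abs x
  have h4 : (0 : ℝ) ≤ 4 ^ (-(t : ℤ)) := by positivity
  rw [squaringRNN_out hD0 hxD, squaringRNN_hid hD0 hxD]
  simp only [Matrix.cons_val_zero, Matrix.cons_val_one, pi_norm_le_iff_of_nonneg (sq_nonneg D),
    Fin.forall_fin_two, Real.norm_eq_abs, true_and]
  refine ⟨?_, norm_squaringState_le hD0 hxD t, ?_, ?_⟩
  · calc |D ^ 2 * (|x| / D - sawtoothSum t (|x| / D)) - x ^ 2|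
        = D ^ 2 * |(|x| / D - sawtoothSum t (|x| / D)) - (|x| / D) ^ 2| := by
          rw [← hsq, ← mul_sub, abs_mul, abs_of_nonneg (sq_nonneg D)]
      _ ≤ D ^ 2 * ((4 : ℝ) ^ (-(t : ℤ)) / 4) := by
          gcongr; exact abs_sub_sawtoothSum_sub_sq_le hy t
      _ ≤ D ^ 2 / 2 * (4 : ℝ) ^ (-(t : ℤ)) := by nlinarith [mul_nonneg (sq_nonneg D) h4]
  · exact abs_mul_le_of_mem_Icc (sq_nonneg D) le_rfl
      ⟨sub_nonneg.2 (sawtoothSum_le_self hy t), by linarith [sawtoothSum_nonneg hy t, hy.2]⟩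
  · nlinarith
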